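/- arXiv:1003.4254 — 3 statements merged into one kernel-verified Lean document; each statement's English description precedes it below -/
import Mathlib

section
/- If Z is a standard normal random variable on ℝ, then E|Z^2 - 1| ≤ 1. -/
open MeasureTheory ProbabilityTheory Real Set
open scoped ENNReal NNReal

lemma transfer (g : ℝ → ℝ) :
    ∫ x, g x ∂(gaussianReal 0 1) = ∫ x, gaussianPDFReal 0 1 x * g x := by
  rw [gaussianReal_of_var_ne_zero 0 one_ne_zero, gaussianPDF_def]
  have : (fun x => ENNReal.ofReal (gaussianPDFReal 0 1 x))
      = fun x => ((gaussianPDFReal 0 1 x).toNNReal : ℝ≥0∞) := rfl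
  rw [this, integral_withDensity_eq_integral_smul
    (measurable_gaussianPDFReal 0 1).real_toNNReal g]
  congr 1
  ext x
  simp [NNReal.smul_def, Real.coe_toNNReal _ (gaussianPDFReal_nonneg 0 1 x)]

lemma pdf_eq (x : ℝ) : gaussianPDFReal 0 1 x = (Real.sqrt (2 * π))⁻¹ * rexp (-x ^ 2 / 2) := by
  simp [gaussianPDFReal]

lemma exp_neg_le {u : ℝ} (hu : 0 ≤ u) : rexp (-u) ≤ 1 - u + u ^ 2 / 2 := by
  have h := Real.quadratic_le_exp_of_nonneg hu
  have h2 : rexp (-u) * rexp u = 1 := by rw [← Real.exp_add]; simp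
  nlinarith [Real.exp_pos (-u), sq_nonneg (u * u), sq_nonneg u]

lemma int_sq_exp : Integrable (fun x : ℝ => x ^ 2 * rexp (-x ^ 2 / 2)) := by
  have hi := integrable_rpow_mul_exp_neg_mul_sq (b := 1/2) (by norm_num) (s := 2) (by norm_num)
  refine hi.congr (Filter.Eventually.of_forall fun x => ?_)
  have h2 : x ^ (2:ℝ) = x ^ 2 := by
    rw [show (2:ℝ) = ((2:ℕ):ℝ) by norm_num, Real.rpow_natCast]
  simp only [h2]
  ring_nf

lemma int_Ioi : ∫ x in Ioi (0:ℝ), x ^ 2 * rexp (-x ^ 2 / 2) = Real.sqrt (2 * π) / 2 := by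
  have h := integral_rpow_mul_exp_neg_mul_rpow (p := 2) (q := 2) (b := 1/2)
    (by norm_num) (by norm_num) (by norm_num)
  have he : ∀ x ∈ Ioi (0:ℝ), x ^ (2:ℝ) * rexp (-(1/2) * x ^ (2:ℝ))
      = x ^ 2 * rexp (-x ^ 2 / 2) := by
    intro x hx
    rw [show ((2:ℝ)) = ((2:ℕ):ℝ) by norm_num, Real.rpow_natCast]
    ring_nf
  rw [setIntegral_congr_fun measurableSet_Ioi he] at h
  rw [h]
  have hg : Real.Gamma ((2 + 1) / 2) = Real.sqrt π / 2 := by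
    rw [show ((2:ℝ) + 1) / 2 = 1/2 + 1 by norm_num, Real.Gamma_add_one (by norm_num),
      Real.Gamma_one_half_eq]
    ring
  rw [hg]
  have hb : ((1:ℝ)/2) ^ (-((2:ℝ) + 1) / 2) = 2 * Real.sqrt 2 := by
    rw [one_div, Real.inv_rpow (by norm_num), ← Real.rpow_neg (by norm_num),
      show -(-((2:ℝ) + 1) / 2) = 1 + 1/2 by norm_num, Real.rpow_add (by norm_num),
      Real.rpow_one, Real.sqrt_eq_rpow]
  rw [hb, Real.sqrt_mul (by norm_num)]
  ring

lemma second_moment : ∫ x : ℝ, gaussianPDFReal 0 1 x * x ^ 2 = 1 := by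
  have h1 : ∫ x : ℝ, x ^ 2 * rexp (-x ^ 2 / 2) = Real.sqrt (2 * π) := by
    have h := integral_comp_abs (f := fun t => t ^ 2 * rexp (-t ^ 2 / 2))
    simp_rw [sq_abs] at h
    rw [h, int_Ioi]; ring
  have h2 : (fun x : ℝ => gaussianPDFReal 0 1 x * x ^ 2)
      = fun x => (Real.sqrt (2 * π))⁻¹ * (x ^ 2 * rexp (-x ^ 2 / 2)) := by
    ext x; rw [pdf_eq]; ring
  rw [h2, MeasureTheory.integral_const_mul, h1, inv_mul_cancel₀]
  positivity

lemma int_pdf_sq : Integrable (fun x : ℝ => gaussianPDFReal 0 1 x * x ^ 2) := by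
  have := int_sq_exp.const_mul (Real.sqrt (2 * π))⁻¹
  refine this.congr (Filter.Eventually.of_forall fun x => ?_)
  simp only [pdf_eq]; ring

lemma int_pdf_max : Integrable (fun x : ℝ => gaussianPDFReal 0 1 x * max (1 - x ^ 2) 0) := by
  refine Integrable.mono' (integrable_gaussianPDFReal 0 1) ?_
    (Filter.Eventually.of_forall fun x => ?_)
  · exact ((measurable_gaussianPDFReal 0 1).mul
      ((measurable_const.sub (measurable_id.pow_const 2)).max measurable_const)).aestronglyMeasurable
  · have h0 := gaussianPDFReal_nonneg 0 1 x
    have hm : max (1 - x ^ 2) 0 ≤ 1 := by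
      rcases le_total (1 - x ^ 2) 0 with h | h
      · simp [max_eq_right h]
      · rw [max_eq_left h]; nlinarith [sq_nonneg x]
    have hm0 : 0 ≤ max (1 - x ^ 2) 0 := le_max_right _ _
    rw [Real.norm_eq_abs, abs_of_nonneg (by positivity)]
    nlinarith

lemma poly_int : ∫ x in (-1:ℝ)..1, (1 - 3/2 * x ^ 2 + 5/8 * x ^ 4 - 1/8 * x ^ 6) = 17/14 := by
  norm_num [intervalIntegral.integral_sub, intervalIntegral.integral_add,
    intervalIntegral.integral_const_mul, integral_pow,
    (by fun_prop : Continuous fun x : ℝ => 3/2 * x ^ 2).intervalIntegrable,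
    (by fun_prop : Continuous fun x : ℝ => 5/8 * x ^ 4).intervalIntegrable,
    (by fun_prop : Continuous fun x : ℝ => 1/8 * x ^ 6).intervalIntegrable,
    (by fun_prop : Continuous fun x : ℝ => 1 - 3/2 * x ^ 2).intervalIntegrable,
    (by fun_prop : Continuous fun x : ℝ => 1 - 3/2 * x ^ 2 + 5/8 * x ^ 4).intervalIntegrable]

lemma pos_part_bound :
    ∫ x : ℝ, gaussianPDFReal 0 1 x * max (1 - x ^ 2) 0 ≤ 17 / (14 * Real.sqrt (2 * π)) := by
  set c := (Real.sqrt (2 * π))⁻¹ with hc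
  have hcpos : 0 < Real.sqrt (2 * π) := by positivity
  set g : ℝ → ℝ := (Icc (-1:ℝ) 1).indicator
    (fun x => c * (1 - 3/2 * x ^ 2 + 5/8 * x ^ 4 - 1/8 * x ^ 6)) with hg
  have hgint : Integrable g := by
    refine (IntegrableOn.integrable_indicator ?_ measurableSet_Icc)
    exact (Continuous.integrableOn_Icc (by fun_prop))
  have hle : ∀ x, gaussianPDFReal 0 1 x * max (1 - x ^ 2) 0 ≤ g x := by
    intro x
    by_cases hx : x ∈ Icc (-1:ℝ) 1
    · rw [hg, indicator_of_mem hx]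
      obtain ⟨h1, h2⟩ := hx
      have hx2 : x ^ 2 ≤ 1 := by nlinarith
      rw [max_eq_left (by linarith), pdf_eq]
      have hE : rexp (-x ^ 2 / 2) ≤ 1 - x ^ 2 / 2 + x ^ 4 / 8 := by
        have := exp_neg_le (u := x ^ 2 / 2) (by positivity)
        rw [show -(x ^ 2 / 2) = -x ^ 2 / 2 by ring] at this
        nlinarith
      have hEpos := Real.exp_pos (-x ^ 2 / 2)
      have hcnn : 0 ≤ c := by positivity
      have key : rexp (-x ^ 2 / 2) * (1 - x ^ 2)
          ≤ 1 - 3/2 * x ^ 2 + 5/8 * x ^ 4 - 1/8 * x ^ 6 := by nlinarith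
      calc c * rexp (-x ^ 2 / 2) * (1 - x ^ 2)
          = c * (rexp (-x ^ 2 / 2) * (1 - x ^ 2)) := by ring
        _ ≤ c * (1 - 3/2 * x ^ 2 + 5/8 * x ^ 4 - 1/8 * x ^ 6) :=
            mul_le_mul_of_nonneg_left key hcnn
    · rw [hg, indicator_of_notMem hx]
      have : 1 - x ^ 2 ≤ 0 := by
        rcases le_or_gt x (-1) with h | h
        · nlinarith
        rcases le_or_gt 1 x with h2 | h2
        · nlinarith
        · exact absurd ⟨by linarith, by linarith⟩ hx
      rw [max_eq_right this, mul_zero]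
  have hmono := integral_mono int_pdf_max hgint hle
  refine hmono.trans ?_
  rw [hg, integral_indicator measurableSet_Icc, integral_Icc_eq_integral_Ioc,
    ← intervalIntegral.integral_of_le (by norm_num : (-1:ℝ) ≤ 1),
    intervalIntegral.integral_const_mul, poly_int]
  rw [hc]
  apply le_of_eq
  rw [eq_div_iff (by positivity)]
  field_simp

theorem abs_moment_sq_sub_one_le_one :
    ∫ z, |z ^ 2 - 1| ∂(gaussianReal 0 1) ≤ 1 := by
  rw [transfer]
  have key : ∀ x : ℝ, gaussianPDFReal 0 1 x * |x ^ 2 - 1|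
      = (gaussianPDFReal 0 1 x * x ^ 2 - gaussianPDFReal 0 1 x)
        + 2 * (gaussianPDFReal 0 1 x * max (1 - x ^ 2) 0) := by
    intro x
    rcases le_total (x ^ 2) 1 with h | h
    · rw [abs_of_nonpos (by linarith), max_eq_left (by linarith)]; ring
    · rw [abs_of_nonneg (by linarith), max_eq_right (by linarith)]; ring
  simp_rw [key]
  have hA : Integrable (fun x : ℝ => gaussianPDFReal 0 1 x * x ^ 2 - gaussianPDFReal 0 1 x) :=
    int_pdf_sq.sub (integrable_gaussianPDFReal 0 1)
  have hB : Integrable (fun x : ℝ => 2 * (gaussianPDFReal 0 1 x * max (1 - x ^ 2) 0)) :=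
    int_pdf_max.const_mul 2
  rw [integral_add hA hB,
    integral_sub int_pdf_sq (integrable_gaussianPDFReal 0 1),
    second_moment, integral_gaussianPDFReal_eq_one 0 one_ne_zero,
    MeasureTheory.integral_const_mul]
  have hs : (17:ℝ)/7 ≤ Real.sqrt (2 * π) := by
    rw [show (17:ℝ)/7 = Real.sqrt ((17/7)^2) by rw [Real.sqrt_sq (by norm_num)]]
    apply Real.sqrt_le_sqrt
    nlinarith [pi_gt_d6]
  have hb := pos_part_bound
  have hcpos : (0:ℝ) < Real.sqrt (2 * π) := by positivity
  have h2 : 17 / (14 * Real.sqrt (2 * π)) ≤ 1/2 := by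
    rw [div_le_iff₀ (by positivity)]
    nlinarith
  linarith
end

section
/- Let h̃: ℝ^k → ℝ be bounded by 1 in absolute value, let φ be the standard Gaussian density, b ∈ (0,1], u ∈ ℝ^k, and a > 0. Then for any indices i, i', i'': |∫∫ h̃(b x + u + c z) φ(x) D_{ii'i''}φ(z) dx dz| ≤ c_0 k a^2, where a = c/b and c > 0, and c_0 is an absolute constant. In particular with b = √((n-1)/n) e^{-s}, c = √(1-e^{-2s}), the bound is c_0 k e^{2s}(1-e^{-2s}) (for n ≥ 2). -/
open MeasureTheory

/-- Partial derivative of `f` in the `i`-th coordinate. -/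
noncomputable def pd {k : ℕ} (i : Fin k) (f : (Fin k → ℝ) → ℝ) (x : Fin k → ℝ) : ℝ :=
  deriv (fun t => f (Function.update x i t)) (x i)

/-- The standard Gaussian density on `ℝ^k`. -/
noncomputable def stdGaussianDensity (k : ℕ) (z : Fin k → ℝ) : ℝ :=
  (2 * Real.pi) ^ (-(k : ℝ) / 2) * Real.exp (-(∑ i, z i ^ 2) / 2)

/-!
Write `a = c / b` and `ψ = ∂ᵢ∂ᵢ'∂ᵢ''φ`. The substitution `x = y - a z` turns the double
integral into `∫ h(b y + u) (∫ φ(y - a z) ψ(z) dz) dy`. Both `φ` and `ψ` are products of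
one-dimensional Gaussian derivatives, and integrating by parts in each coordinate gives
`∫ φ(y - a z) ψ(z) dz = a³ ∫ ψ(y - a z) φ(z) dz`; undoing the substitution, the double integral
is `a³` times the same expression with `φ` and `ψ` exchanged. Each of the two expressions is at
most `‖ψ‖₁`, which is bounded independently of `k` since `ψ` depends on at most three
coordinates. Hence the double integral is at most `‖ψ‖₁ min(1, |a|³) ≤ ‖ψ‖₁ a²`.
-/

open Function ProbabilityTheory Polynomial Real

section DoubleIntegral

variable {E : Type*} [NormedAddCommGroup E] [NormedSpace ℝ E] [MeasurableSpace E] {μ : Measure E}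
  {h f g : E → ℝ} {C : ℝ}

theorem abs_integral_integral_le (hC : ∀ x, |h x| ≤ C) (hf : Integrable f μ)
    (hg : Integrable g μ) (b c : ℝ) (u : E) :
    |∫ x, (∫ z, h (b • x + u + c • z) * g z ∂μ) * f x ∂μ|
      ≤ C * (∫ z, |g z| ∂μ) * ∫ x, |f x| ∂μ := by
  have hinner (x : E) : |∫ z, h (b • x + u + c • z) * g z ∂μ| ≤ C * ∫ z, |g z| ∂μ := by
    rw [← integral_const_mul, ← Real.norm_eq_abs]
    refine norm_integral_le_of_norm_le (hg.abs.const_mul C) (ae_of_all _ fun z => ?_)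
    rw [Real.norm_eq_abs, abs_mul]
    exact mul_le_mul_of_nonneg_right (hC _) (abs_nonneg _)
  rw [← integral_const_mul (μ := μ) (C * ∫ z, |g z| ∂μ), ← Real.norm_eq_abs]
  refine norm_integral_le_of_norm_le (hf.abs.const_mul _) (ae_of_all _ fun x => ?_)
  rw [Real.norm_eq_abs, abs_mul]
  exact mul_le_mul_of_nonneg_right (hinner x) (abs_nonneg _)

variable [BorelSpace E] [SecondCountableTopology E] [SFinite μ] [μ.IsAddRightInvariant]

theorem measurePreserving_prod_sub_smul (a : ℝ) :
    MeasurePreserving (fun p : E × E => (p.1, p.2 - a • p.1)) (μ.prod μ) (μ.prod μ) :=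
  MeasurePreserving.id μ |>.skew_product (g := fun z x => x - a • z) (by fun_prop)
    (ae_of_all _ fun z => map_sub_right_eq_self μ (a • z))

theorem integral_integral_comp_sub_smul {f : E → E → ℝ} (hf : Integrable (uncurry f) (μ.prod μ))
    (a : ℝ) : ∫ x, ∫ z, f x z ∂μ ∂μ = ∫ y, ∫ z, f (y - a • z) z ∂μ ∂μ := by
  have hS := measurePreserving_prod_sub_smul (μ := μ) a
  have hF : Integrable (fun p : E × E => f p.2 p.1) (μ.prod μ) := hf.swap
  have hFS : Integrable (fun p : E × E => f (p.2 - a • p.1) p.1) (μ.prod μ) :=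
    (hS.integrable_comp hF.aestronglyMeasurable).2 hF
  have hshear := integral_map hS.measurable.aemeasurable (hS.map_eq ▸ hF.aestronglyMeasurable)
  rw [hS.map_eq] at hshear
  rw [integral_integral_swap hf, ← integral_prod _ hF, hshear, integral_prod_symm _ hFS]

theorem integral_integral_smul_add_smul (hh : Measurable h) (hC : ∀ x, |h x| ≤ C)
    (hf : Integrable f μ) (hg : Integrable g μ) {b : ℝ} (hb : b ≠ 0) (c : ℝ) (u : E) :
    ∫ x, (∫ z, h (b • x + u + c • z) * g z ∂μ) * f x ∂μ
      = ∫ y, h (b • y + u) * ∫ z, f (y - (c / b) • z) * g z ∂μ ∂μ := by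
  have hint : Integrable (uncurry fun x z => h (b • x + u + c • z) * g z * f x) (μ.prod μ) := by
    have hmeas : Measurable fun p : E × E => h (b • p.1 + u + c • p.2) := hh.comp (by fun_prop)
    have := (hf.mul_prod hg).bdd_mul hmeas.aestronglyMeasurable (ae_of_all _ fun p => hC _)
    refine this.congr (ae_of_all _ fun p => ?_)
    simp only [uncurry]
    ring
  have hshift (y z : E) : b • (y - (c / b) • z) + u + c • z = b • y + u := by
    rw [smul_sub, smul_smul, mul_div_cancel₀ c hb]
    abel
  simp_rw [← integral_mul_const]
  rw [integral_integral_comp_sub_smul hint (c / b)]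
  simp_rw [hshift, ← integral_const_mul, mul_assoc, mul_comm (g _)]

theorem integral_integral_smul_add_smul_comm (hh : Measurable h) (hC : ∀ x, |h x| ≤ C)
    (hf : Integrable f μ) (hg : Integrable g μ) {b : ℝ} (hb : b ≠ 0) (c : ℝ) (u : E) (n : ℕ)
    (hfg : ∀ y, ∫ z, f (y - (c / b) • z) * g z ∂μ
      = (c / b) ^ n * ∫ z, g (y - (c / b) • z) * f z ∂μ) :
    ∫ x, (∫ z, h (b • x + u + c • z) * g z ∂μ) * f x ∂μ
      = (c / b) ^ n * ∫ x, (∫ z, h (b • x + u + c • z) * f z ∂μ) * g x ∂μ := by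
  rw [integral_integral_smul_add_smul hh hC hf hg hb,
    integral_integral_smul_add_smul hh hC hg hf hb, ← integral_const_mul]
  simp_rw [hfg, mul_left_comm]

theorem abs_integral_integral_le_sq_mul (hh : Measurable h) (hC : ∀ x, |h x| ≤ C)
    (hf : Integrable f μ) (hg : Integrable g μ) {b : ℝ} (hb : b ≠ 0) (c : ℝ) (u : E) {n : ℕ}
    (hn : 2 ≤ n)
    (hfg : ∀ y, ∫ z, f (y - (c / b) • z) * g z ∂μ
      = (c / b) ^ n * ∫ z, g (y - (c / b) • z) * f z ∂μ) :
    |∫ x, (∫ z, h (b • x + u + c • z) * g z ∂μ) * f x ∂μ|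
      ≤ (c / b) ^ 2 * (C * (∫ z, |g z| ∂μ) * ∫ x, |f x| ∂μ) := by
  have hdirect := abs_integral_integral_le hC hf hg b c u
  rcases le_or_gt |c / b| 1 with hsmall | hlarge
  · rw [integral_integral_smul_add_smul_comm hh hC hf hg hb c u n hfg, abs_mul, abs_pow]
    calc |c / b| ^ n * |∫ x, (∫ z, h (b • x + u + c • z) * f z ∂μ) * g x ∂μ|
        ≤ |c / b| ^ 2 * (C * (∫ x, |f x| ∂μ) * ∫ z, |g z| ∂μ) := by
          gcongr ?_ * ?_
          · exact pow_le_pow_of_le_one (abs_nonneg _) hsmall hn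
          · exact abs_integral_integral_le hC hg hf b c u
      _ = (c / b) ^ 2 * (C * (∫ z, |g z| ∂μ) * ∫ x, |f x| ∂μ) := by rw [sq_abs]; ring
  · exact hdirect.trans (le_mul_of_one_le_left ((abs_nonneg _).trans hdirect)
      (one_lt_sq_iff_one_lt_abs _ |>.2 hlarge).le)

end DoubleIntegral

noncomputable def stdGaussianDeriv (p : ℕ) : ℝ → ℝ := iteratedDeriv p (gaussianPDFReal 0 1)

theorem gaussianPDFReal_zero_one :
    gaussianPDFReal 0 1 = fun x => (√(2 * π))⁻¹ * exp (-(x ^ 2 / 2)) := by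
  ext x
  simp [gaussianPDFReal, neg_div]

theorem contDiff_gaussianPDFReal_zero_one : ContDiff ℝ ⊤ (gaussianPDFReal 0 1) := by
  rw [gaussianPDFReal_zero_one]
  fun_prop

theorem hasDerivAt_stdGaussianDeriv (p : ℕ) (x : ℝ) :
    HasDerivAt (stdGaussianDeriv p) (stdGaussianDeriv (p + 1) x) x := by
  simp only [stdGaussianDeriv]
  rw [iteratedDeriv_succ]
  exact (contDiff_gaussianPDFReal_zero_one.differentiable_iteratedDeriv p
    (WithTop.coe_lt_top _) x).hasDerivAt

theorem continuous_stdGaussianDeriv (p : ℕ) : Continuous (stdGaussianDeriv p) :=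
  continuous_iff_continuousAt.2 fun x => (hasDerivAt_stdGaussianDeriv p x).continuousAt

theorem stdGaussianDeriv_eq (p : ℕ) :
    stdGaussianDeriv p =
      fun x => (√(2 * π))⁻¹ * ((-1) ^ p * aeval x (hermite p) * exp (-(x ^ 2 / 2))) := by
  ext x
  rw [stdGaussianDeriv, gaussianPDFReal_zero_one, iteratedDeriv_const_mul_field,
    iteratedDeriv_eq_iterate, deriv_gaussian_eq_hermite_mul_gaussian]

theorem integrable_aeval_mul_exp_neg_sq {R : Type*} [CommSemiring R] [Algebra R ℝ] (P : R[X]) :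
    Integrable fun x : ℝ => aeval x P * exp (-(x ^ 2 / 2)) := by
  simp_rw [aeval_eq_sum_range, Finset.sum_mul]
  refine integrable_finsetSum _ fun i _ => ?_
  have := (integrable_rpow_mul_exp_neg_mul_sq (b := 1 / 2) (by norm_num)
    (s := i) (neg_one_lt_zero.trans_le i.cast_nonneg)).const_mul (algebraMap R ℝ (P.coeff i))
  refine this.congr (ae_of_all _ fun x => ?_)
  simp only [rpow_natCast, Algebra.smul_def]
  ring_nf

theorem integrable_stdGaussianDeriv (p : ℕ) : Integrable (stdGaussianDeriv p) := by
  rw [stdGaussianDeriv_eq]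
  refine ((integrable_aeval_mul_exp_neg_sq (hermite p)).const_mul ((√(2 * π))⁻¹ * (-1) ^ p)).congr
    (ae_of_all _ fun x => ?_)
  simp only
  ring

theorem abs_le_integral_abs_deriv {f f' : ℝ → ℝ} (hderiv : ∀ x, HasDerivAt f (f' x) x)
    (hf : Integrable f) (hf' : Integrable f') (x : ℝ) : |f x| ≤ ∫ t, |f' t| := by
  have hbot := tendsto_zero_of_hasDerivAt_of_integrableOn_Iic (a := x) (fun t _ => hderiv t)
    hf'.integrableOn hf.integrableOn
  have hftc := integral_Iic_of_hasDerivAt_of_tendsto (hderiv x).continuousAt.continuousWithinAt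
    (fun t _ => hderiv t) hf'.integrableOn hbot
  rw [← sub_zero (f x), ← hftc]
  exact abs_integral_le_integral_abs.trans
    (setIntegral_le_integral hf'.abs (ae_of_all _ fun t => abs_nonneg _))

theorem abs_stdGaussianDeriv_le (p : ℕ) (x : ℝ) :
    |stdGaussianDeriv p x| ≤ ∫ t, |stdGaussianDeriv (p + 1) t| :=
  abs_le_integral_abs_deriv (hasDerivAt_stdGaussianDeriv p) (integrable_stdGaussianDeriv p)
    (integrable_stdGaussianDeriv (p + 1)) x

theorem integrable_stdGaussianDeriv_comp_mul (p q : ℕ) (a y : ℝ) :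
    Integrable fun t => stdGaussianDeriv p (y - a * t) * stdGaussianDeriv q t :=
  (integrable_stdGaussianDeriv q).bdd_mul
    ((continuous_stdGaussianDeriv p).comp (by fun_prop)).aestronglyMeasurable
    (ae_of_all _ fun t => abs_stdGaussianDeriv_le p _)

theorem integral_stdGaussianDeriv_comp_mul_succ (p q : ℕ) (a y : ℝ) :
    ∫ t, stdGaussianDeriv p (y - a * t) * stdGaussianDeriv (q + 1) t
      = a * ∫ t, stdGaussianDeriv (p + 1) (y - a * t) * stdGaussianDeriv q t := by
  have hu (t : ℝ) : HasDerivAt (fun s => stdGaussianDeriv p (y - a * s))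
      (-a * stdGaussianDeriv (p + 1) (y - a * t)) t := by
    have := (hasDerivAt_stdGaussianDeriv p (y - a * t)).comp t
      (((hasDerivAt_id t).const_mul a).const_sub y)
    exact this.congr_deriv (by ring)
  have hibp := integral_mul_deriv_eq_deriv_mul_of_integrable (fun t _ => hu t)
    (fun t _ => hasDerivAt_stdGaussianDeriv q t)
    (integrable_stdGaussianDeriv_comp_mul p (q + 1) a y)
    (((integrable_stdGaussianDeriv_comp_mul (p + 1) q a y).const_mul (-a)).congr
      (ae_of_all _ fun t => by simp only [Pi.mul_apply]; ring))
    (integrable_stdGaussianDeriv_comp_mul p q a y)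
  rw [hibp, ← integral_const_mul, ← integral_neg]
  simp only [neg_mul, neg_neg, mul_assoc]

theorem integral_stdGaussianDeriv_comp_mul (p q : ℕ) (a y : ℝ) :
    ∫ t, stdGaussianDeriv p (y - a * t) * stdGaussianDeriv q t
      = a ^ q * ∫ t, stdGaussianDeriv (p + q) (y - a * t) * stdGaussianDeriv 0 t := by
  induction q generalizing p with
  | zero => simp
  | succ q ih =>
    rw [integral_stdGaussianDeriv_comp_mul_succ, ih, pow_succ, mul_left_comm, mul_assoc,
      add_right_comm, add_assoc]

theorem integral_abs_stdGaussianDeriv_zero : ∫ t, |stdGaussianDeriv 0 t| = 1 := by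
  simp only [stdGaussianDeriv, iteratedDeriv_zero, abs_of_nonneg (gaussianPDFReal_nonneg _ _ _)]
  exact integral_gaussianPDFReal_eq_one 0 one_ne_zero

theorem exists_integral_abs_stdGaussianDeriv_le_pow (N : ℕ) :
    ∃ C, 1 ≤ C ∧ ∀ p ≤ N, ∫ t, |stdGaussianDeriv p t| ≤ C ^ p := by
  have hnonneg (p : ℕ) : 0 ≤ ∫ t, |stdGaussianDeriv p t| := integral_nonneg fun _ => abs_nonneg _
  set S := ∑ p ∈ Finset.range (N + 1), ∫ t, |stdGaussianDeriv p t|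
  have hS : 0 ≤ S := Finset.sum_nonneg fun p _ => hnonneg p
  refine ⟨1 + S, by linarith, fun p hp => ?_⟩
  rcases p with _ | p
  · simp [integral_abs_stdGaussianDeriv_zero]
  · calc ∫ t, |stdGaussianDeriv (p + 1) t| ≤ S :=
          Finset.single_le_sum (fun q _ => hnonneg q) (Finset.mem_range.2 (by omega))
      _ ≤ 1 + S := by linarith
      _ ≤ (1 + S) ^ (p + 1) := le_self_pow₀ (by linarith) (by omega)

noncomputable def stdGaussianPartial {ι : Type*} [Fintype ι] (m : ι → ℕ) (z : ι → ℝ) : ℝ :=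
  ∏ j, stdGaussianDeriv (m j) (z j)

section Partial

variable {ι : Type*} [Fintype ι]

theorem integrable_stdGaussianPartial (m : ι → ℕ) : Integrable (stdGaussianPartial m) :=
  Integrable.fintype_prod (f := fun j => stdGaussianDeriv (m j))
    fun j => integrable_stdGaussianDeriv (m j)

theorem integral_abs_stdGaussianPartial_le {m : ι → ℕ} {C : ℝ}
    (hC : ∀ j, ∫ t, |stdGaussianDeriv (m j) t| ≤ C ^ m j) :
    ∫ z, |stdGaussianPartial m z| ≤ C ^ ∑ j, m j := by
  simp_rw [stdGaussianPartial, Finset.abs_prod]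
  rw [integral_fintype_prod_volume_eq_prod (fun j t => |stdGaussianDeriv (m j) t|),
    ← Finset.prod_pow_eq_pow_sum]
  exact Finset.prod_le_prod (fun j _ => integral_nonneg fun _ => abs_nonneg _) fun j _ => hC j

theorem integral_stdGaussianPartial_comp_sub_smul_mul (m : ι → ℕ) (a : ℝ) (y : ι → ℝ) :
    ∫ z, stdGaussianPartial 0 (y - a • z) * stdGaussianPartial m z
      = a ^ (∑ j, m j) * ∫ z, stdGaussianPartial m (y - a • z) * stdGaussianPartial 0 z := by
  simp only [stdGaussianPartial, ← Finset.prod_mul_distrib, Pi.sub_apply, Pi.smul_apply,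
    smul_eq_mul, Pi.zero_apply]
  rw [integral_fintype_prod_volume_eq_prod
      (fun j t => stdGaussianDeriv 0 (y j - a * t) * stdGaussianDeriv (m j) t),
    integral_fintype_prod_volume_eq_prod
      (fun j t => stdGaussianDeriv (m j) (y j - a * t) * stdGaussianDeriv 0 t),
    ← Finset.prod_pow_eq_pow_sum, ← Finset.prod_mul_distrib]
  exact Finset.prod_congr rfl fun j _ => by
    rw [integral_stdGaussianDeriv_comp_mul, zero_add]

end Partial

theorem stdGaussianDensity_eq_stdGaussianPartial (k : ℕ) :
    stdGaussianDensity k = stdGaussianPartial 0 := by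
  ext z
  simp only [stdGaussianDensity, stdGaussianPartial, Pi.zero_apply, stdGaussianDeriv,
    iteratedDeriv_zero, gaussianPDFReal_zero_one, Finset.prod_mul_distrib, Finset.prod_const,
    Finset.card_univ, Fintype.card_fin, ← exp_sum]
  congr 1
  · rw [sqrt_eq_rpow, ← rpow_neg (by positivity), ← rpow_natCast, ← rpow_mul (by positivity)]
    ring_nf
  · rw [Finset.sum_neg_distrib, ← Finset.sum_div, neg_div]

theorem pd_stdGaussianPartial {k : ℕ} (m : Fin k → ℕ) (j : Fin k) :
    pd j (stdGaussianPartial m) = stdGaussianPartial (m + Pi.single j 1) := by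
  ext x
  have hsplit (n : Fin k → ℕ) (w : Fin k → ℝ) : stdGaussianPartial n w
      = stdGaussianDeriv (n j) (w j) * ∏ l ∈ {j}ᶜ, stdGaussianDeriv (n l) (w l) :=
    Fintype.prod_eq_mul_prod_compl j _
  have hrest (t : ℝ) : ∏ l ∈ {j}ᶜ, stdGaussianDeriv (m l) (Function.update x j t l)
      = ∏ l ∈ {j}ᶜ, stdGaussianDeriv ((m + Pi.single j 1 : Fin k → ℕ) l) (x l) :=
    Finset.prod_congr rfl fun l hl => by
      have hlj : l ≠ j := by simpa using hl
      simp [hlj]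
  simp_rw [pd, hsplit, Function.update_self, hrest]
  rw [deriv_mul_const (hasDerivAt_stdGaussianDeriv _ _).differentiableAt,
    (hasDerivAt_stdGaussianDeriv _ _).deriv]
  simp

theorem pd_pd_pd_stdGaussianDensity {k : ℕ} (i i' i'' : Fin k) :
    pd i (pd i' (pd i'' (stdGaussianDensity k)))
      = stdGaussianPartial (Pi.single i'' 1 + Pi.single i' 1 + Pi.single i 1) := by
  rw [stdGaussianDensity_eq_stdGaussianPartial, pd_stdGaussianPartial, pd_stdGaussianPartial,
    pd_stdGaussianPartial, zero_add]

theorem abs_integral_integral_stdGaussianPartial_le {k : ℕ} {h : (Fin k → ℝ) → ℝ}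
    (hh : Measurable h) (hh1 : ∀ x, |h x| ≤ 1) {b : ℝ} (hb : b ≠ 0) (c : ℝ) (u : Fin k → ℝ)
    {m : Fin k → ℕ} (hm : 2 ≤ ∑ j, m j) {C : ℝ}
    (hC : ∀ j, ∫ t, |stdGaussianDeriv (m j) t| ≤ C ^ m j) :
    |∫ x, (∫ z, h (b • x + u + c • z) * stdGaussianPartial m z) * stdGaussianDensity k x|
      ≤ (c / b) ^ 2 * C ^ ∑ j, m j := by
  have hφ : ∫ z, |stdGaussianPartial (0 : Fin k → ℕ) z| ≤ 1 := by
    simpa using integral_abs_stdGaussianPartial_le (m := (0 : Fin k → ℕ)) (C := 1)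
      (fun j => by simp [integral_abs_stdGaussianDeriv_zero])
  rw [stdGaussianDensity_eq_stdGaussianPartial]
  calc _ ≤ (c / b) ^ 2 * (1 * (∫ z, |stdGaussianPartial m z|) * ∫ z, |stdGaussianPartial 0 z|) :=
        abs_integral_integral_le_sq_mul hh hh1 (integrable_stdGaussianPartial 0)
          (integrable_stdGaussianPartial m) hb c u hm
          (integral_stdGaussianPartial_comp_sub_smul_mul m (c / b))
    _ ≤ (c / b) ^ 2 * (1 * C ^ (∑ j, m j) * 1) := by
        have hψ := integral_abs_stdGaussianPartial_le hC
        have hψ0 : 0 ≤ ∫ z, |stdGaussianPartial m z| := integral_nonneg fun _ => abs_nonneg _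
        gcongr
        linarith
    _ = (c / b) ^ 2 * C ^ ∑ j, m j := by ring

theorem div_sq_le_two_mul_exp {n : ℕ} (hn : 2 ≤ n) {s : ℝ} (hs : 0 < s) :
    (√(1 - exp (-2 * s)) / (√(((n : ℝ) - 1) / n) * exp (-s))) ^ 2
      ≤ 2 * (exp (2 * s) * (1 - exp (-2 * s))) := by
  have hn' : (2 : ℝ) ≤ n := by exact_mod_cast hn
  have hE : exp (-2 * s) < 1 := exp_lt_one_iff.2 (by linarith)
  have hsq : exp (-s) ^ 2 = exp (-2 * s) := by rw [← exp_nat_mul]; ring_nf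
  have hinv : exp (2 * s) * exp (-2 * s) = 1 := by rw [← exp_add]; simp
  have hhalf : (1 : ℝ) / 2 ≤ (n - 1) / n := by rw [le_div_iff₀ (by linarith)]; linarith
  rw [div_pow, mul_pow, sq_sqrt (by linarith), sq_sqrt (div_nonneg (by linarith) (by linarith)),
    hsq, div_le_iff₀ (by positivity)]
  calc 1 - exp (-2 * s) = 2 * (1 / 2) * (1 - exp (-2 * s)) * (exp (2 * s) * exp (-2 * s)) := by
        rw [hinv]; ring
    _ ≤ 2 * ((n - 1) / n) * (1 - exp (-2 * s)) * (exp (2 * s) * exp (-2 * s)) := by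
        gcongr
    _ = _ := by ring

theorem abs_integral_integral_pd_pd_pd_le {C : ℝ}
    (hC : ∀ p ≤ 3, ∫ t, |stdGaussianDeriv p t| ≤ C ^ p) {k : ℕ} {h : (Fin k → ℝ) → ℝ}
    (hh : Measurable h) (hh1 : ∀ x, |h x| ≤ 1) {b : ℝ} (hb : b ≠ 0) (c : ℝ) (u : Fin k → ℝ)
    (i i' i'' : Fin k) :
    |∫ x, (∫ z, h (b • x + u + c • z) * pd i (pd i' (pd i'' (stdGaussianDensity k))) z)
      * stdGaussianDensity k x| ≤ C ^ 3 * (c / b) ^ 2 := by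
  rw [pd_pd_pd_stdGaussianDensity]
  set m : Fin k → ℕ := Pi.single i'' 1 + Pi.single i' 1 + Pi.single i 1
  have hm : ∑ j, m j = 3 := by simp [m, Finset.sum_add_distrib]
  have hm3 (j : Fin k) : m j ≤ 3 := hm ▸ Finset.single_le_sum (by simp) (Finset.mem_univ j)
  rw [mul_comm, ← hm]
  exact abs_integral_integral_stdGaussianPartial_le hh hh1 hb c u (by omega) fun j => hC _ (hm3 j)

/-- Bound on `∫∫ h̃(bx + u + cz) φ(x) D_{ii'i''}φ(z) dx dz` for `|h̃| ≤ 1`, with an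
absolute constant `c₀`; in particular, with `b = √((n-1)/n) e^{-s}` and
`c = √(1-e^{-2s})`, the bound `c₀ k e^{2s}(1-e^{-2s})`. -/
theorem double_integral_third_partial_bound :
    ∃ c₀ : ℝ, 0 < c₀ ∧
      (∀ (k : ℕ) (h : (Fin k → ℝ) → ℝ) (b c : ℝ) (u : Fin k → ℝ) (i i' i'' : Fin k),
        Measurable h → (∀ x, |h x| ≤ 1) → 0 < b → b ≤ 1 → 0 < c →
        |∫ x : Fin k → ℝ, (∫ z : Fin k → ℝ,
              h (b • x + u + c • z) * pd i (pd i' (pd i'' (stdGaussianDensity k))) z)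
            * stdGaussianDensity k x|
          ≤ c₀ * k * (c / b) ^ 2) ∧
      (∀ (k : ℕ) (h : (Fin k → ℝ) → ℝ) (n : ℕ) (s : ℝ) (u : Fin k → ℝ)
          (i i' i'' : Fin k),
        Measurable h → (∀ x, |h x| ≤ 1) → 2 ≤ n → 0 < s →
        |∫ x : Fin k → ℝ, (∫ z : Fin k → ℝ,
              h ((Real.sqrt ((n - 1) / n) * Real.exp (-s)) • x + u
                  + Real.sqrt (1 - Real.exp (-2 * s)) • z)
                * pd i (pd i' (pd i'' (stdGaussianDensity k))) z)
            * stdGaussianDensity k x|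
          ≤ c₀ * k * Real.exp (2 * s) * (1 - Real.exp (-2 * s))) := by
  obtain ⟨C, hC1, hC⟩ := exists_integral_abs_stdGaussianDeriv_le_pow 3
  have hk {k : ℕ} (i : Fin k) : (1 : ℝ) ≤ k := Nat.one_le_cast.2 i.pos
  refine ⟨2 * C ^ 3, by positivity, fun k h b c u i i' i'' hh hh1 hb _ _ => ?_,
    fun k h n s u i i' i'' hh hh1 hn hs => ?_⟩
  · calc _ ≤ C ^ 3 * (c / b) ^ 2 := abs_integral_integral_pd_pd_pd_le hC hh hh1 hb.ne' c u i i' i''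
      _ ≤ 2 * k * (C ^ 3 * (c / b) ^ 2) :=
          le_mul_of_one_le_left (by positivity) (by linarith [hk i])
      _ = 2 * C ^ 3 * k * (c / b) ^ 2 := by ring
  · have hn' : (2 : ℝ) ≤ n := by exact_mod_cast hn
    have hb : 0 < √(((n : ℝ) - 1) / n) * exp (-s) :=
      mul_pos (sqrt_pos.2 (div_pos (by linarith) (by linarith))) (exp_pos _)
    have hX : 0 ≤ exp (2 * s) * (1 - exp (-2 * s)) :=
      mul_nonneg (exp_pos _).le (sub_nonneg.2 (exp_le_one_iff.2 (by linarith)))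
    calc _ ≤ C ^ 3 * (√(1 - exp (-2 * s)) / (√(((n : ℝ) - 1) / n) * exp (-s))) ^ 2 :=
          abs_integral_integral_pd_pd_pd_le hC hh hh1 hb.ne' _ u i i' i''
      _ ≤ C ^ 3 * (2 * (exp (2 * s) * (1 - exp (-2 * s)))) := by
          gcongr
          exact div_sq_le_two_mul_exp hn hs
      _ ≤ k * (C ^ 3 * (2 * (exp (2 * s) * (1 - exp (-2 * s))))) :=
          le_mul_of_one_le_left (by positivity) (hk i)
      _ = 2 * C ^ 3 * k * exp (2 * s) * (1 - exp (-2 * s)) := by ring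
end

section
/- Smoothing inequality: let μ, ν, K be probability measures on ℝ^k with K({x : |x| < ε}) = α > 1/2. Then for every bounded measurable f: ℝ^k → ℝ, |∫ f d(μ − ν)| ≤ (2α − 1)^{-1} [γ*(f; ε) + ω*_f(2ε; ν)], where f^+_ε(x) = sup{f(y): |y−x|<ε}, f^-_ε(x) = inf{f(y): |y−x|<ε}, γ(f;ε) = max(|∫ f^+_ε d((μ−ν)⋆K)|, |∫ f^-_ε d((μ−ν)⋆K)|), γ*(f;ε) = sup_y γ(f(·+y); ε), ω_f(x;ε) = sup{|f(y)−f(x)|: |y−x|<ε}, ω_f(ε;ν) = ∫ ω_f(x;ε) dν(x), and ω*_f(2ε;ν) = sup_y ω_{f(·+y)}(2ε; ν). -/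
open MeasureTheory

noncomputable section

/-- `f⁺_ε(x) = sup {f(y) : |y - x| < ε}`. -/
def fPlus {k : ℕ} (f : EuclideanSpace ℝ (Fin k) → ℝ) (ε : ℝ)
    (x : EuclideanSpace ℝ (Fin k)) : ℝ :=
  sSup (f '' Metric.ball x ε)

/-- `f⁻_ε(x) = inf {f(y) : |y - x| < ε}`. -/
def fMinus {k : ℕ} (f : EuclideanSpace ℝ (Fin k) → ℝ) (ε : ℝ)
    (x : EuclideanSpace ℝ (Fin k)) : ℝ :=
  sInf (f '' Metric.ball x ε)

/-- `∫ g d(μ ⋆ K)`, the integral against the convolution `μ ⋆ K`. -/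
def convInt {k : ℕ} (g : EuclideanSpace ℝ (Fin k) → ℝ)
    (μ K : Measure (EuclideanSpace ℝ (Fin k))) : ℝ :=
  ∫ p, g (p.1 + p.2) ∂(μ.prod K)

/-- `γ(f; ε) = max(|∫ f⁺_ε d((μ−ν)⋆K)|, |∫ f⁻_ε d((μ−ν)⋆K)|)`. -/
def gammaFn {k : ℕ} (f : EuclideanSpace ℝ (Fin k) → ℝ) (ε : ℝ)
    (μ ν K : Measure (EuclideanSpace ℝ (Fin k))) : ℝ :=
  max |convInt (fPlus f ε) μ K - convInt (fPlus f ε) ν K|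
    |convInt (fMinus f ε) μ K - convInt (fMinus f ε) ν K|

/-- `γ*(f; ε) = sup_y γ(f(·+y); ε)`. -/
def gammaStar {k : ℕ} (f : EuclideanSpace ℝ (Fin k) → ℝ) (ε : ℝ)
    (μ ν K : Measure (EuclideanSpace ℝ (Fin k))) : ℝ :=
  ⨆ y : EuclideanSpace ℝ (Fin k), gammaFn (fun x => f (x + y)) ε μ ν K

/-- `ω_f(x; ε) = sup {|f(y) − f(x)| : |y − x| < ε}`. -/
def omegaFn {k : ℕ} (f : EuclideanSpace ℝ (Fin k) → ℝ) (ε : ℝ)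
    (x : EuclideanSpace ℝ (Fin k)) : ℝ :=
  sSup ((fun y => |f y - f x|) '' Metric.ball x ε)

/-- `ω_f(ε; ν) = ∫ ω_f(x; ε) dν(x)`. -/
def omegaInt {k : ℕ} (f : EuclideanSpace ℝ (Fin k) → ℝ) (ε : ℝ)
    (ν : Measure (EuclideanSpace ℝ (Fin k))) : ℝ :=
  ∫ x, omegaFn f ε x ∂ν

/-- `ω*_f(ε; ν) = sup_y ω_{f(·+y)}(ε; ν)`. -/
def omegaStar {k : ℕ} (f : EuclideanSpace ℝ (Fin k) → ℝ) (ε : ℝ)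
    (ν : Measure (EuclideanSpace ℝ (Fin k))) : ℝ :=
  ⨆ y : EuclideanSpace ℝ (Fin k), omegaInt (fun x => f (x + y)) ε ν

end

/-
Write `τ(y) = ∫ f(· + y) d(μ - ν)` and `T = sup_y |τ(y)|`. Since `f ≤ f⁺_ε ≤ f + ω_f(·; 2ε)` on
`ε`-balls, the function `z ↦ ∫ f⁺_ε(· + z + y) d(μ - ν)` is at least `τ(y) - ω*` when `|z| < ε`
and at least `-T - ω*` everywhere. Integrating it against `K`, which gives mass `α` to the
`ε`-ball, yields `α τ(y) - ω* - (1 - α) T ≤ γ*`. Applying this also to `-f` and taking the sup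
over `y` gives `(2α - 1) T ≤ γ* + ω*`, while `|∫ f d(μ - ν)| = |τ(0)| ≤ T`.
-/

open MeasureTheory Metric

section BoundedIntegrals

variable {Ω : Type*} [MeasurableSpace Ω] {μ ν : Measure Ω} {g : Ω → ℝ} {C : ℝ}

lemma integrable_of_forall_abs_le [IsFiniteMeasure μ] (hg : Measurable g)
    (hC : ∀ x, |g x| ≤ C) : Integrable g μ :=
  .of_bound hg.aestronglyMeasurable C (ae_of_all _ fun x => (Real.norm_eq_abs _).trans_le (hC x))

lemma abs_integral_le_of_forall_abs_le [IsProbabilityMeasure μ] (hC : ∀ x, |g x| ≤ C) :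
    |∫ x, g x ∂μ| ≤ C := by
  simpa using norm_integral_le_of_norm_le_const (μ := μ)
    (ae_of_all _ fun x => (Real.norm_eq_abs _).trans_le (hC x))

lemma abs_integral_sub_integral_le [IsProbabilityMeasure μ] [IsProbabilityMeasure ν]
    (hC : ∀ x, |g x| ≤ C) : |∫ x, g x ∂μ - ∫ x, g x ∂ν| ≤ 2 * C := by
  linarith [abs_sub (∫ x, g x ∂μ) (∫ x, g x ∂ν), abs_integral_le_of_forall_abs_le (μ := μ) hC,
    abs_integral_le_of_forall_abs_le (μ := ν) hC]

lemma mul_add_mul_le_integral [IsProbabilityMeasure μ] {s : Set Ω} (hs : MeasurableSet s)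
    (hg : Integrable g μ) {a b : ℝ} (ha : ∀ x ∈ s, a ≤ g x) (hb : ∀ x ∈ sᶜ, b ≤ g x) :
    μ.real s * a + (1 - μ.real s) * b ≤ ∫ x, g x ∂μ := by
  rw [← integral_add_compl hs hg, ← probReal_compl_eq_one_sub hs, mul_comm, mul_comm _ b]
  exact add_le_add (setIntegral_ge_of_const_le_real hs (measure_ne_top _ _) ha hg.integrableOn)
    (setIntegral_ge_of_const_le_real hs.compl (measure_ne_top _ _) hb hg.integrableOn)

end BoundedIntegrals

section TranslateDiff

variable {G : Type*} [MeasurableSpace G] [Add G] {μ ν : Measure G} {f : G → ℝ} {C : ℝ}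

lemma integrable_comp_add_right_of_abs_le [MeasurableAdd G] [IsFiniteMeasure μ]
    (hf : Measurable f) (hC : ∀ x, |f x| ≤ C) (c : G) : Integrable (fun x => f (x + c)) μ :=
  integrable_of_forall_abs_le (hf.comp (measurable_add_const c)) fun _ => hC _

noncomputable def translateDiff (f : G → ℝ) (μ ν : Measure G) (y : G) : ℝ :=
  ∫ x, f (x + y) ∂μ - ∫ x, f (x + y) ∂ν

lemma translateDiff_neg (y : G) :
    translateDiff (fun x => -f x) μ ν y = -translateDiff f μ ν y := by
  simp only [translateDiff, integral_neg]
  ring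

lemma abs_translateDiff_le_iSup [IsProbabilityMeasure μ] [IsProbabilityMeasure ν]
    (hC : ∀ x, |f x| ≤ C) (y : G) :
    |translateDiff f μ ν y| ≤ ⨆ y, |translateDiff f μ ν y| :=
  le_ciSup (f := fun y => |translateDiff f μ ν y|)
    ⟨2 * C, Set.forall_mem_range.2 fun _ => abs_integral_sub_integral_le fun _ => hC _⟩ y

end TranslateDiff

section Envelopes

variable {k : ℕ} {f : EuclideanSpace ℝ (Fin k) → ℝ} {C δ : ℝ} {x y : EuclideanSpace ℝ (Fin k)}

lemma le_fPlus (hC : ∀ z, |f z| ≤ C) (hy : y ∈ ball x δ) : f y ≤ fPlus f δ x :=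
  le_csSup ⟨C, Set.forall_mem_image.2 fun z _ => (abs_le.1 (hC z)).2⟩ ⟨y, hy, rfl⟩

lemma fPlus_le (hδ : 0 < δ) {c : ℝ} (h : ∀ y ∈ ball x δ, f y ≤ c) : fPlus f δ x ≤ c :=
  csSup_le ⟨f x, x, mem_ball_self hδ, rfl⟩ (Set.forall_mem_image.2 h)

lemma fMinus_le (hC : ∀ z, |f z| ≤ C) (hy : y ∈ ball x δ) : fMinus f δ x ≤ f y :=
  csInf_le ⟨-C, Set.forall_mem_image.2 fun z _ => (abs_le.1 (hC z)).1⟩ ⟨y, hy, rfl⟩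

lemma le_fMinus (hδ : 0 < δ) {c : ℝ} (h : ∀ y ∈ ball x δ, c ≤ f y) : c ≤ fMinus f δ x :=
  le_csInf ⟨f x, x, mem_ball_self hδ, rfl⟩ (Set.forall_mem_image.2 h)

lemma abs_fPlus_le (hC : ∀ z, |f z| ≤ C) (hδ : 0 < δ) (x : EuclideanSpace ℝ (Fin k)) :
    |fPlus f δ x| ≤ C :=
  abs_le.2 ⟨(abs_le.1 (hC x)).1.trans (le_fPlus hC (mem_ball_self hδ)),
    fPlus_le hδ fun y _ => (abs_le.1 (hC y)).2⟩

lemma abs_fMinus_le (hC : ∀ z, |f z| ≤ C) (hδ : 0 < δ) (x : EuclideanSpace ℝ (Fin k)) :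
    |fMinus f δ x| ≤ C :=
  abs_le.2 ⟨le_fMinus hδ fun y _ => (abs_le.1 (hC y)).1,
    (fMinus_le hC (mem_ball_self hδ)).trans (abs_le.1 (hC x)).2⟩

lemma fPlus_neg (f : EuclideanSpace ℝ (Fin k) → ℝ) (δ : ℝ) :
    fPlus (fun x => -f x) δ = fun x => -fMinus f δ x := by
  ext x
  rw [fPlus, fMinus, ← Real.sSup_neg, ← Set.image_neg_eq_neg, Set.image_image]

lemma fMinus_neg (f : EuclideanSpace ℝ (Fin k) → ℝ) (δ : ℝ) :
    fMinus (fun x => -f x) δ = fun x => -fPlus f δ x := by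
  ext x
  rw [fPlus, fMinus, ← Real.sInf_neg, ← Set.image_neg_eq_neg, Set.image_image]

lemma lowerSemicontinuous_fPlus (hC : ∀ z, |f z| ≤ C) (hδ : 0 < δ) :
    LowerSemicontinuous (fPlus f δ) := by
  intro x c hc
  obtain ⟨_, ⟨y, hy, rfl⟩, hcy⟩ := exists_lt_of_lt_csSup
    (⟨f x, x, mem_ball_self hδ, rfl⟩ : (f '' ball x δ).Nonempty) hc
  filter_upwards [ball_mem_nhds x (sub_pos.2 (mem_ball.1 hy))] with x' hx'
  refine hcy.trans_le (le_fPlus hC ?_)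
  rw [mem_ball] at hx' ⊢
  linarith [dist_triangle y x x', dist_comm x x']

lemma measurable_fMinus (hC : ∀ z, |f z| ≤ C) (hδ : 0 < δ) : Measurable (fMinus f δ) := by
  have h : fMinus f δ = fun x => -fPlus (fun x => -f x) δ x := by simp [fPlus_neg]
  rw [h]
  exact (lowerSemicontinuous_fPlus (by simpa using hC) hδ).measurable.neg

lemma le_omegaFn (hC : ∀ z, |f z| ≤ C) (hy : y ∈ ball x δ) : |f y - f x| ≤ omegaFn f δ x := by
  refine le_csSup ⟨2 * C, Set.forall_mem_image.2 fun z _ => ?_⟩ ⟨y, hy, rfl⟩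
  linarith [abs_sub (f z) (f x), hC z, hC x]

lemma omegaFn_le (hδ : 0 < δ) {c : ℝ} (h : ∀ y ∈ ball x δ, |f y - f x| ≤ c) :
    omegaFn f δ x ≤ c :=
  csSup_le ⟨|f x - f x|, x, mem_ball_self hδ, rfl⟩ (Set.forall_mem_image.2 h)

lemma abs_omegaFn_le (hC : ∀ z, |f z| ≤ C) (hδ : 0 < δ) (x : EuclideanSpace ℝ (Fin k)) :
    |omegaFn f δ x| ≤ 2 * C := by
  have h0 : 0 ≤ omegaFn f δ x := by simpa using le_omegaFn hC (mem_ball_self hδ : x ∈ ball x δ)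
  rw [abs_of_nonneg h0]
  exact omegaFn_le hδ fun y _ => by linarith [abs_sub (f y) (f x), hC y, hC x]

lemma fPlus_le_add_omegaFn (hC : ∀ z, |f z| ≤ C) (hδ : 0 < δ) (hxy : dist x y < δ) :
    fPlus f δ x ≤ f y + omegaFn f (2 * δ) y :=
  fPlus_le hδ fun z hz => by
    have hzy : z ∈ ball y (2 * δ) := by
      rw [mem_ball] at hz ⊢
      linarith [dist_triangle z x y]
    linarith [le_abs_self (f z - f y), le_omegaFn hC hzy]

lemma omegaFn_eq_max (hC : ∀ z, |f z| ≤ C) (hδ : 0 < δ) (x : EuclideanSpace ℝ (Fin k)) :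
    omegaFn f δ x = max (fPlus f δ x - f x) (f x - fMinus f δ x) := by
  apply le_antisymm
  · refine omegaFn_le hδ fun y hy => abs_sub_le_iff.2 ⟨?_, ?_⟩
    · exact le_max_of_le_left (by linarith [le_fPlus hC hy])
    · exact le_max_of_le_right (by linarith [fMinus_le hC hy])
  · have hPlus : fPlus f δ x ≤ f x + omegaFn f δ x :=
      fPlus_le hδ fun y hy => by linarith [le_abs_self (f y - f x), le_omegaFn hC hy]
    have hMinus : f x - omegaFn f δ x ≤ fMinus f δ x :=
      le_fMinus hδ fun y hy => by linarith [neg_abs_le (f y - f x), le_omegaFn hC hy]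
    exact max_le (by linarith) (by linarith)

lemma measurable_omegaFn (hf : Measurable f) (hC : ∀ z, |f z| ≤ C) (hδ : 0 < δ) :
    Measurable (omegaFn f δ) := by
  rw [funext (omegaFn_eq_max hC hδ)]
  exact ((lowerSemicontinuous_fPlus hC hδ).measurable.sub hf).max
    (hf.sub (measurable_fMinus hC hδ))

lemma omegaFn_neg (f : EuclideanSpace ℝ (Fin k) → ℝ) (δ : ℝ) :
    omegaFn (fun x => -f x) δ = omegaFn f δ := by
  ext x
  simp only [omegaFn, ← abs_neg (f _ - f x), neg_sub_neg, neg_sub]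

lemma image_ball_comp_add_right {β : Type*} (g : EuclideanSpace ℝ (Fin k) → β)
    (x y : EuclideanSpace ℝ (Fin k)) (δ : ℝ) :
    (fun u => g (u + y)) '' ball x δ = g '' ball (x + y) δ := by
  rw [← Set.image_image g (· + y), Set.image_add_right, preimage_add_right_ball, sub_neg_eq_add]

lemma fPlus_comp_add_right (f : EuclideanSpace ℝ (Fin k) → ℝ) (δ : ℝ)
    (y : EuclideanSpace ℝ (Fin k)) :
    fPlus (fun x => f (x + y)) δ = fun x => fPlus f δ (x + y) := by
  ext x
  rw [fPlus, fPlus, image_ball_comp_add_right]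

lemma fMinus_comp_add_right (f : EuclideanSpace ℝ (Fin k) → ℝ) (δ : ℝ)
    (y : EuclideanSpace ℝ (Fin k)) :
    fMinus (fun x => f (x + y)) δ = fun x => fMinus f δ (x + y) := by
  ext x
  rw [fMinus, fMinus, image_ball_comp_add_right]

lemma omegaFn_comp_add_right (f : EuclideanSpace ℝ (Fin k) → ℝ) (δ : ℝ)
    (y : EuclideanSpace ℝ (Fin k)) :
    omegaFn (fun x => f (x + y)) δ = fun x => omegaFn f δ (x + y) := by
  ext x
  rw [omegaFn, omegaFn, image_ball_comp_add_right (fun u => |f u - f (x + y)|)]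

end Envelopes

section Smoothing

variable {k : ℕ} {μ ν K : Measure (EuclideanSpace ℝ (Fin k))} {f : EuclideanSpace ℝ (Fin k) → ℝ}
  {C ε α : ℝ}

lemma convInt_neg (g : EuclideanSpace ℝ (Fin k) → ℝ)
    (μ K : Measure (EuclideanSpace ℝ (Fin k))) :
    convInt (fun x => -g x) μ K = -convInt g μ K :=
  integral_neg _

lemma gammaFn_neg (f : EuclideanSpace ℝ (Fin k) → ℝ) (ε : ℝ)
    (μ ν K : Measure (EuclideanSpace ℝ (Fin k))) :
    gammaFn (fun x => -f x) ε μ ν K = gammaFn f ε μ ν K := by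
  rw [gammaFn, gammaFn, fPlus_neg, fMinus_neg, convInt_neg, convInt_neg, convInt_neg, convInt_neg,
    neg_sub_neg, neg_sub_neg, max_comm]
  congr 1 <;> exact abs_sub_comm _ _

lemma gammaStar_neg (f : EuclideanSpace ℝ (Fin k) → ℝ) (ε : ℝ)
    (μ ν K : Measure (EuclideanSpace ℝ (Fin k))) :
    gammaStar (fun x => -f x) ε μ ν K = gammaStar f ε μ ν K := by
  simp only [gammaStar, gammaFn_neg]

lemma omegaStar_neg (f : EuclideanSpace ℝ (Fin k) → ℝ) (δ : ℝ)
    (ν : Measure (EuclideanSpace ℝ (Fin k))) :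
    omegaStar (fun x => -f x) δ ν = omegaStar f δ ν := by
  simp only [omegaStar, omegaInt, omegaFn_neg]

lemma integrable_comp_add_prod [IsFiniteMeasure μ] [IsFiniteMeasure K]
    {g : EuclideanSpace ℝ (Fin k) → ℝ} (hg : Measurable g) (hC : ∀ x, |g x| ≤ C) :
    Integrable (fun p => g (p.1 + p.2)) (μ.prod K) :=
  integrable_of_forall_abs_le (hg.comp (measurable_fst.add measurable_snd)) fun _ => hC _

lemma convInt_eq_integral_integral [IsFiniteMeasure μ] [IsFiniteMeasure K]
    {g : EuclideanSpace ℝ (Fin k) → ℝ} (hg : Measurable g) (hC : ∀ x, |g x| ≤ C) :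
    convInt g μ K = ∫ z, ∫ x, g (x + z) ∂μ ∂K :=
  integral_prod_symm _ (integrable_comp_add_prod hg hC)

lemma gammaFn_comp_add_right_le_gammaStar [IsProbabilityMeasure μ] [IsProbabilityMeasure ν]
    [IsProbabilityMeasure K] (hC : ∀ z, |f z| ≤ C) (hε : 0 < ε) (y : EuclideanSpace ℝ (Fin k)) :
    gammaFn (fun x => f (x + y)) ε μ ν K ≤ gammaStar f ε μ ν K := by
  refine le_ciSup (f := fun y => gammaFn (fun x => f (x + y)) ε μ ν K)
    ⟨2 * C, Set.forall_mem_range.2 fun y => ?_⟩ y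
  rw [gammaFn, fPlus_comp_add_right, fMinus_comp_add_right]
  exact max_le (abs_integral_sub_integral_le fun _ => abs_fPlus_le hC hε _)
    (abs_integral_sub_integral_le fun _ => abs_fMinus_le hC hε _)

lemma integral_omegaFn_comp_add_right_le_omegaStar [IsProbabilityMeasure ν] {δ : ℝ}
    (hC : ∀ z, |f z| ≤ C) (hδ : 0 < δ) (y : EuclideanSpace ℝ (Fin k)) :
    ∫ x, omegaFn f δ (x + y) ∂ν ≤ omegaStar f δ ν := by
  have h : ∀ y, omegaInt (fun x => f (x + y)) δ ν = ∫ x, omegaFn f δ (x + y) ∂ν := fun y => by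
    rw [omegaInt, omegaFn_comp_add_right]
  rw [← h]
  refine le_ciSup (f := fun y => omegaInt (fun x => f (x + y)) δ ν)
    ⟨2 * C, Set.forall_mem_range.2 fun y => ?_⟩ y
  rw [h]
  exact (le_abs_self _).trans (abs_integral_le_of_forall_abs_le fun _ => abs_omegaFn_le hC hδ _)

lemma translateDiff_sub_le_integral_fPlus [IsProbabilityMeasure μ] [IsProbabilityMeasure ν]
    (hf : Measurable f) (hC : ∀ z, |f z| ≤ C) (hε : 0 < ε) {a b : EuclideanSpace ℝ (Fin k)}
    (hab : dist a b < ε) :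
    translateDiff f μ ν b - ∫ x, omegaFn f (2 * ε) (x + b) ∂ν
      ≤ ∫ x, fPlus f ε (x + a) ∂μ - ∫ x, fPlus f ε (x + a) ∂ν := by
  have hdist : ∀ x, dist (x + a) (x + b) < ε := fun x => by rwa [dist_add_left]
  have hf_int : ∀ (m : Measure (EuclideanSpace ℝ (Fin k))) [IsFiniteMeasure m],
      Integrable (fun x => f (x + b)) m := fun _ _ => integrable_comp_add_right_of_abs_le hf hC b
  have hF_int : ∀ (m : Measure (EuclideanSpace ℝ (Fin k))) [IsFiniteMeasure m],
      Integrable (fun x => fPlus f ε (x + a)) m := fun _ _ =>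
    integrable_comp_add_right_of_abs_le (lowerSemicontinuous_fPlus hC hε).measurable
      (abs_fPlus_le hC hε) a
  have hω_int : Integrable (fun x => omegaFn f (2 * ε) (x + b)) ν :=
    integrable_comp_add_right_of_abs_le (measurable_omegaFn hf hC (by linarith))
      (abs_omegaFn_le hC (by linarith)) b
  have hμ : ∫ x, f (x + b) ∂μ ≤ ∫ x, fPlus f ε (x + a) ∂μ :=
    integral_mono (hf_int μ) (hF_int μ)
      fun x => le_fPlus hC (mem_ball.2 (dist_comm (x + a) _ ▸ hdist x))
  have hν : ∫ x, fPlus f ε (x + a) ∂ν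
      ≤ ∫ x, f (x + b) ∂ν + ∫ x, omegaFn f (2 * ε) (x + b) ∂ν := by
    rw [← integral_add (hf_int ν) hω_int]
    exact integral_mono (hF_int ν) ((hf_int ν).add hω_int)
      fun x => fPlus_le_add_omegaFn hC hε (hdist x)
  rw [translateDiff]
  linarith

lemma mul_translateDiff_le [IsProbabilityMeasure μ] [IsProbabilityMeasure ν]
    [IsProbabilityMeasure K] (hf : Measurable f) (hC : ∀ z, |f z| ≤ C) (hε : 0 < ε)
    (hK : K.real (ball 0 ε) = α) (y : EuclideanSpace ℝ (Fin k)) :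
    α * translateDiff f μ ν y
      ≤ gammaStar f ε μ ν K + omegaStar f (2 * ε) ν + (1 - α) * ⨆ w, |translateDiff f μ ν w| := by
  have hFm : Measurable fun x => fPlus f ε (x + y) :=
    (lowerSemicontinuous_fPlus hC hε).measurable.comp (measurable_add_const y)
  have hFC : ∀ x, |fPlus f ε (x + y)| ≤ C := fun _ => abs_fPlus_le hC hε _
  set I : EuclideanSpace ℝ (Fin k) → ℝ :=
    fun z => ∫ x, fPlus f ε (x + (z + y)) ∂μ - ∫ x, fPlus f ε (x + (z + y)) ∂ν
  have hint := (integrable_comp_add_prod (μ := μ) (K := K) hFm hFC).integral_prod_right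
  have hint' := (integrable_comp_add_prod (μ := ν) (K := K) hFm hFC).integral_prod_right
  simp only [add_assoc] at hint hint'
  have hI : Integrable I K := hint.sub hint'
  have hI_le : ∫ z, I z ∂K ≤ gammaStar f ε μ ν K := calc
    ∫ z, I z ∂K = convInt (fPlus (fun x => f (x + y)) ε) μ K
        - convInt (fPlus (fun x => f (x + y)) ε) ν K := by
      rw [integral_sub hint hint', fPlus_comp_add_right, convInt_eq_integral_integral hFm hFC,
        convInt_eq_integral_integral hFm hFC]
      simp only [add_assoc]
    _ ≤ gammaFn (fun x => f (x + y)) ε μ ν K := (le_abs_self _).trans (le_max_left _ _)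
    _ ≤ gammaStar f ε μ ν K := gammaFn_comp_add_right_le_gammaStar hC hε y
  have hω : ∀ w, ∫ x, omegaFn f (2 * ε) (x + w) ∂ν ≤ omegaStar f (2 * ε) ν :=
    integral_omegaFn_comp_add_right_le_omegaStar hC (by linarith)
  have hnear : ∀ z ∈ ball 0 ε, translateDiff f μ ν y - omegaStar f (2 * ε) ν ≤ I z := by
    intro z hz
    have h := translateDiff_sub_le_integral_fPlus (μ := μ) (ν := ν) hf hC hε (a := z + y)
      (b := y) (by simpa using hz)
    linarith [hω y]
  have hfar : ∀ z ∈ (ball 0 ε)ᶜ,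
      -(⨆ w, |translateDiff f μ ν w|) - omegaStar f (2 * ε) ν ≤ I z := by
    intro z _
    have h := translateDiff_sub_le_integral_fPlus (μ := μ) (ν := ν) hf hC hε (a := z + y)
      (b := z + y) (by simpa using hε)
    linarith [hω (z + y), neg_abs_le (translateDiff f μ ν (z + y)),
      abs_translateDiff_le_iSup (μ := μ) (ν := ν) hC (z + y)]
  have hsplit := mul_add_mul_le_integral measurableSet_ball hI hnear hfar
  rw [hK] at hsplit
  linarith

lemma mul_abs_translateDiff_le [IsProbabilityMeasure μ] [IsProbabilityMeasure ν]
    [IsProbabilityMeasure K] (hf : Measurable f) (hC : ∀ z, |f z| ≤ C) (hε : 0 < ε)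
    (hK : K.real (ball 0 ε) = α) (y : EuclideanSpace ℝ (Fin k)) :
    α * |translateDiff f μ ν y|
      ≤ gammaStar f ε μ ν K + omegaStar f (2 * ε) ν + (1 - α) * ⨆ w, |translateDiff f μ ν w| := by
  have hneg := mul_translateDiff_le (μ := μ) (ν := ν) (K := K) (f := fun x => -f x) hf.neg
    (by simpa using hC) hε hK y
  simp only [translateDiff_neg, abs_neg, gammaStar_neg, omegaStar_neg] at hneg
  rcases abs_cases (translateDiff f μ ν y) with ⟨h, _⟩ | ⟨h, _⟩
  · rw [h]
    exact mul_translateDiff_le hf hC hε hK y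
  · rw [h]
    linarith

end Smoothing

theorem smoothing_inequality_general {k : ℕ}
    (μ ν K : Measure (EuclideanSpace ℝ (Fin k)))
    [IsProbabilityMeasure μ] [IsProbabilityMeasure ν] [IsProbabilityMeasure K]
    (ε α : ℝ) (hε : 0 < ε) (hα : 1 / 2 < α)
    (hK : K (Metric.ball 0 ε) = ENNReal.ofReal α)
    (f : EuclideanSpace ℝ (Fin k) → ℝ) (hf : Measurable f)
    (C : ℝ) (hbdd : ∀ x, |f x| ≤ C) :
    |∫ x, f x ∂μ - ∫ x, f x ∂ν|
      ≤ (2 * α - 1)⁻¹ * (gammaStar f ε μ ν K + omegaStar f (2 * ε) ν) := by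
  have h2α : 0 < 2 * α - 1 := by linarith
  have hKα : K.real (ball 0 ε) = α := by
    rw [measureReal_def, hK, ENNReal.toReal_ofReal (by linarith)]
  set T := ⨆ y, |translateDiff f μ ν y|
  have hT : (2 * α - 1) * T ≤ gammaStar f ε μ ν K + omegaStar f (2 * ε) ν := by
    have h : T ≤ (gammaStar f ε μ ν K + omegaStar f (2 * ε) ν + (1 - α) * T) / α :=
      ciSup_le fun y => (le_div_iff₀' (by linarith)).2 (mul_abs_translateDiff_le hf hbdd hε hKα y)
    rw [le_div_iff₀ (by linarith)] at h
    linarith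
  have hτ₀ : |∫ x, f x ∂μ - ∫ x, f x ∂ν| ≤ T := calc
    _ = |translateDiff f μ ν 0| := by simp only [translateDiff, add_zero]
    _ ≤ T := abs_translateDiff_le_iSup hbdd 0
  rw [inv_mul_eq_div, le_div_iff₀' h2α]
  exact (mul_le_mul_of_nonneg_left hτ₀ h2α.le).trans hT

/-- Smoothing inequality. -/
theorem smoothing_inequality {k : ℕ}
    (μ ν K : Measure (EuclideanSpace ℝ (Fin k)))
    [IsProbabilityMeasure μ] [IsProbabilityMeasure ν] [IsProbabilityMeasure K]
    (ε α : ℝ) (hε : 0 < ε) (hα : 1 / 2 < α)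
    (hK : K (Metric.ball 0 ε) = ENNReal.ofReal α)
    (f : EuclideanSpace ℝ (Fin k) → ℝ) (hf : Measurable f)
    (C : ℝ) (hbdd : ∀ x, |f x| ≤ C)
    (hfp : Measurable (fPlus f ε)) (hfm : Measurable (fMinus f ε)) :
    |∫ x, f x ∂μ - ∫ x, f x ∂ν|
      ≤ (2 * α - 1)⁻¹ * (gammaStar f ε μ ν K + omegaStar f (2 * ε) ν) :=
  smoothing_inequality_general μ ν K ε α hε hα hK f hf C hbdd
end
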